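/- arXiv:1307.2219 — 2 statements merged into one kernel-verified Lean document; each statement's English description precedes it below -/
import Mathlib

section
/- For every t ≥ 2, (1/t²) ∫_{1/t}^{1/2} 1/(λ² |log λ|³) dλ ≤ C (t^{-3/2} + 1/(t (log t)³)) for some absolute constant C. -/
/-!
On `[1/t, 1/2]` the integrand is at most `λ⁻² / (log 2)³`, which already suffices for
`t ≤ 4`. For `t ≥ 4` split at `λ = t^{-1/2}`: on `[t^{-1/2}, 1/2]` the same bound integrates to
`O(√t)`, while on `[1/t, t^{-1/2}]` we have `|log λ| ≥ (log t) / 2`, so that piece is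
`O(t / (log t)³)`.
-/

open Real intervalIntegral MeasureTheory

lemma continuousOn_one_div_sq_mul_abs_log_pow {a b : ℝ} (ha : 0 < a) (hb : b < 1) (n : ℕ) :
    ContinuousOn (fun l : ℝ => 1 / (l ^ 2 * |log l| ^ n)) (Set.Icc a b) := by
  refine continuousOn_const.div (by fun_prop (disch := grind)) fun l hl => ?_
  have hl0 : 0 < l := ha.trans_le hl.1
  have : log l ≠ 0 := (log_neg hl0 (hl.2.trans_lt hb)).ne
  positivity

lemma intervalIntegrable_one_div_sq_mul_abs_log_pow {a b : ℝ} (ha : 0 < a) (hab : a ≤ b)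
    (hb : b < 1) (n : ℕ) :
    IntervalIntegrable (fun l : ℝ => 1 / (l ^ 2 * |log l| ^ n)) volume a b :=
  (continuousOn_one_div_sq_mul_abs_log_pow ha hb n).intervalIntegrable_of_Icc hab

lemma log_le_abs_log_of_le_inv {x l : ℝ} (hl : 0 < l) (h : l ≤ x⁻¹) : log x ≤ |log l| := by
  have := log_le_log hl h
  rw [log_inv] at this
  exact (le_neg.mp this).trans (neg_le_abs _)

lemma integral_one_div_sq_mul_abs_log_pow_le {a b x : ℝ} (ha : 0 < a) (hab : a ≤ b)
    (hbx : b ≤ x⁻¹) (hx : 1 < x) (n : ℕ) :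
    ∫ l in a..b, 1 / (l ^ 2 * |log l| ^ n) ≤ (a⁻¹ - b⁻¹) / log x ^ n := by
  have hb : b < 1 := hbx.trans_lt (inv_lt_one_of_one_lt₀ hx)
  have h0 : (0 : ℝ) ∉ Set.uIcc a b := by
    rw [Set.uIcc_of_le hab]; exact fun h => ha.not_ge h.1
  calc ∫ l in a..b, 1 / (l ^ 2 * |log l| ^ n)
      ≤ ∫ l in a..b, (log x ^ n)⁻¹ * l ^ (-2 : ℤ) := by
        refine integral_mono_on hab (intervalIntegrable_one_div_sq_mul_abs_log_pow ha hab hb n)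
          ((intervalIntegrable_zpow (Or.inr h0)).const_mul _) fun l hl => ?_
        have hl0 : 0 < l := ha.trans_le hl.1
        have hlogx : 0 < log x := log_pos hx
        rw [zpow_neg, zpow_ofNat, ← mul_inv, one_div, mul_comm]
        gcongr
        exact log_le_abs_log_of_le_inv hl0 (hl.2.trans hbx)
    _ = (a⁻¹ - b⁻¹) / log x ^ n := by
        rw [intervalIntegral.integral_const_mul, integral_zpow (Or.inr ⟨by norm_num, h0⟩)]
        norm_num
        ring

lemma integral_one_div_sq_mul_abs_log_cube_le_of_two_le {t : ℝ} (ht : 2 ≤ t) :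
    ∫ l in t⁻¹..2⁻¹, 1 / (l ^ 2 * |log l| ^ 3) ≤ t / log 2 ^ 3 := by
  refine (integral_one_div_sq_mul_abs_log_pow_le (by positivity) (inv_anti₀ two_pos ht)
    le_rfl one_lt_two 3).trans ?_
  have hlog2 : 0 < log 2 := log_pos one_lt_two
  rw [inv_inv, inv_inv]
  gcongr
  linarith

lemma integral_one_div_sq_mul_abs_log_cube_le_of_four_le {t : ℝ} (ht : 4 ≤ t) :
    ∫ l in t⁻¹..2⁻¹, 1 / (l ^ 2 * |log l| ^ 3) ≤
      8 * t / log t ^ 3 + √t / log 2 ^ 3 := by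
  have ht0 : 0 < t := by linarith
  have hs : 2 ≤ √t := le_sqrt_of_sq_le (by linarith)
  have hst : √t ≤ t := by nlinarith [mul_self_sqrt ht0.le]
  have hts : t⁻¹ ≤ (√t)⁻¹ := inv_anti₀ (by positivity) hst
  have hs2 : (√t)⁻¹ ≤ 2⁻¹ := inv_anti₀ two_pos hs
  have hnear :
      ∫ l in t⁻¹..(√t)⁻¹, 1 / (l ^ 2 * |log l| ^ 3) ≤ (t - √t) / log √t ^ 3 := by
    simpa using integral_one_div_sq_mul_abs_log_pow_le (by positivity) hts le_rfl
      (by linarith) 3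
  have hfar :
      ∫ l in (√t)⁻¹..2⁻¹, 1 / (l ^ 2 * |log l| ^ 3) ≤ (√t - 2) / log 2 ^ 3 := by
    simpa using integral_one_div_sq_mul_abs_log_pow_le (by positivity) hs2 le_rfl one_lt_two 3
  rw [← integral_add_adjacent_intervals
    (intervalIntegrable_one_div_sq_mul_abs_log_pow (by positivity) hts (by linarith) 3)
    (intervalIntegrable_one_div_sq_mul_abs_log_pow (by positivity) hs2 (by norm_num) 3)]
  refine add_le_add (hnear.trans ?_) (hfar.trans ?_)
  · have hlogt : 0 < log t ^ 3 := pow_pos (log_pos (by linarith)) 3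
    rw [log_sqrt ht0.le, div_pow, div_div_eq_mul_div, mul_comm]
    gcongr
    all_goals linarith [sqrt_nonneg t]
  · have hlog2 : 0 < log 2 := log_pos one_lt_two
    gcongr
    linarith

/-- For t ≥ 2, (1/t²) ∫_{1/t}^{1/2} 1/(λ²|log λ|³) dλ ≤ C (t^{-3/2} + 1/(t (log t)³)). -/
theorem stmt2 : ∃ C : ℝ, ∀ t : ℝ, 2 ≤ t →
    (1/t^2) * ∫ l in Set.Icc (1/t) (1/2 : ℝ), 1 / (l^2 * |Real.log l| ^ 3)
      ≤ C * (t ^ (-(3:ℝ)/2) + 1 / (t * (Real.log t) ^ 3)) := by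
  refine ⟨16, fun t ht => ?_⟩
  have ht0 : 0 < t := by linarith
  have hlog2 : 0 < log 2 := log_pos one_lt_two
  have hlogt : 0 < log t := log_pos (by linarith)
  have hrpow : 0 < t ^ (-(3:ℝ)/2) := rpow_pos_of_pos ht0 _
  rw [integral_Icc_eq_integral_Ioc, ← integral_of_le (by gcongr), one_div t, one_div (2 : ℝ)]
  rcases le_or_gt t 4 with ht4 | ht4
  · have hlog : log t ^ 3 ≤ 8 * log 2 ^ 3 := by
      have : log t ≤ 2 * log 2 :=
        calc log t ≤ log (2 ^ 2) := log_le_log ht0 (by linarith)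
          _ = 2 * log 2 := by rw [log_pow]; norm_num
      nlinarith [pow_le_pow_left₀ hlogt.le this 3]
    calc 1 / t ^ 2 * ∫ l in t⁻¹..2⁻¹, 1 / (l ^ 2 * |log l| ^ 3)
        ≤ 1 / t ^ 2 * (t / log 2 ^ 3) := by
          gcongr; exact integral_one_div_sq_mul_abs_log_cube_le_of_two_le ht
      _ ≤ 16 * (1 / (t * log t ^ 3)) := by
          field_simp
          nlinarith [pow_pos hlog2 3]
      _ ≤ _ := by gcongr; linarith
  · have hsqrt : t ^ (-(3:ℝ)/2) = √t / t ^ 2 := by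
      rw [sqrt_eq_rpow, ← rpow_natCast, ← rpow_sub ht0]
      norm_num
    have hlog2_cube : 1 / log 2 ^ 3 ≤ 16 := by
      rw [div_le_iff₀ (by positivity)]
      nlinarith [pow_le_pow_left₀ (by norm_num) log_two_gt_d9.le 3]
    calc 1 / t ^ 2 * ∫ l in t⁻¹..2⁻¹, 1 / (l ^ 2 * |log l| ^ 3)
        ≤ 1 / t ^ 2 * (8 * t / log t ^ 3 + √t / log 2 ^ 3) := by
          gcongr; exact integral_one_div_sq_mul_abs_log_cube_le_of_four_le ht4.le
      _ = 1 / log 2 ^ 3 * t ^ (-(3:ℝ)/2) + 8 * (1 / (t * log t ^ 3)) := by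
          rw [hsqrt]; field_simp; ring
      _ ≤ _ := by nlinarith [one_div_pos.2 (by positivity : 0 < t * log t ^ 3)]
end

section
/- Let ω : [0,∞) → ℂ be supported on [1/4, ∞) and satisfy |ω(z)| ≤ (1+z)^{-1/2} and |ω'(z)| ≤ (1+z)^{-3/2}. Let t > 0, r > 0 with t − r ≥ t/2. Then |∫₀^∞ e^{iλ(t−r)} χ̃(λ) λ^{-1/2-ε} ω(λ r) dλ| ≤ C_ε t^{-1/2}, where χ̃ is a smooth function vanishing on [0, 1/2] and equal to 1 on [1,∞), and ε > 0. -/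
open MeasureTheory Set Filter Complex

set_option maxHeartbeats 2000000

lemma aux19 (ε M N : ℝ) (hε : 0 < ε) (hN1 : 1 ≤ N) (χ : ℝ → ℝ)
    (hχ : ContDiff ℝ (⊤ : ℕ∞) χ) (hχ0 : ∀ x : ℝ, x ≤ 1/2 → χ x = 0) (hχ1 : ∀ x : ℝ, 1 ≤ x → χ x = 1)
    (hM : ∀ x, |deriv χ x| ≤ M) (hNb : ∀ x, |χ x| ≤ N)
    (ω ω' : ℝ → ℂ) (t r : ℝ) (ht : 0 < t) (hr : 0 < r) (htr : t/2 ≤ t - r)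
    (hsupp : ∀ z : ℝ, z < 1/4 → ω z = 0)
    (hωb : ∀ z : ℝ, 0 ≤ z → ‖ω z‖ ≤ (1 + z) ^ (-(1:ℝ)/2))
    (hder : ∀ z : ℝ, HasDerivAt ω (ω' z) z)
    (hω'b : ∀ z : ℝ, 0 ≤ z → ‖ω' z‖ ≤ (1 + z) ^ (-(3:ℝ)/2)) :
    ‖∫ l in Set.Ioi (0:ℝ), Complex.exp (Complex.I * l * ((t : ℂ) - r)) * (χ l : ℂ) *
        ((l ^ (-(1:ℝ)/2 - ε) : ℝ) : ℂ) * ω (l * r)‖ ≤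
      (8 * ((2:ℝ)^ε * (M + N*(1/2+ε) + N) + 1)) * t ^ (-(1:ℝ)/2) := by
  set p : ℝ := -(1:ℝ)/2 - ε with hpdef
  have hp_neg : p < 0 := by rw [hpdef]; linarith
  set K : ℝ := (2:ℝ)^ε * (M + N*(1/2+ε) + N) + 1 with hKdef
  have hM0 : 0 ≤ M := le_trans (abs_nonneg _) (hM 0)
  have hN0 : 0 < N := lt_of_lt_of_le one_pos hN1
  have h2ε : (0:ℝ) < 2^ε := Real.rpow_pos_of_pos (by norm_num) ε
  have hK0 : 0 < K := by
    have : 0 ≤ (2:ℝ)^ε * (M + N*(1/2+ε) + N) := by positivity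
    rw [hKdef]; linarith
  have hapos : 0 < t - r := lt_of_lt_of_le (by linarith) htr
  have hrt : r ≤ t := by linarith
  -- basic continuity/derivative facts
  have hωc : Continuous ω := continuous_iff_continuousAt.2 fun z => (hder z).continuousAt
  have hχc : Continuous χ := hχ.continuous
  have hdχc : Continuous (deriv χ) := hχ.continuous_deriv (by simp)
  have hdχ0 : ∀ x : ℝ, x < 1/2 → deriv χ x = 0 := by
    intro x hx
    have h1 : χ =ᶠ[nhds x] fun _ => 0 := by
      filter_upwards [Iio_mem_nhds hx] with y hy using hχ0 y hy.le
    rw [h1.deriv_eq]; exact deriv_const x 0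
  have hdχ1 : ∀ x : ℝ, 1 < x → deriv χ x = 0 := by
    intro x hx
    have h1 : χ =ᶠ[nhds x] fun _ => 1 := by
      filter_upwards [Ioi_mem_nhds hx] with y hy using hχ1 y hy.le
    rw [h1.deriv_eq]; exact deriv_const x 1
  have hω'0 : ∀ z : ℝ, z < 1/4 → ω' z = 0 := by
    intro z hz
    have h1 : ω =ᶠ[nhds z] fun _ => 0 := by
      filter_upwards [Iio_mem_nhds hz] with y hy using hsupp y hy
    exact ((hder z).unique ((hasDerivAt_const z (0:ℂ)).congr_of_eventuallyEq h1))
  -- main objects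
  set F : ℝ → ℂ := fun l => (χ l : ℂ) * ((l ^ p : ℝ) : ℂ) * ω (l * r) with hF
  set F' : ℝ → ℂ := fun l =>
      ((deriv χ l : ℝ) : ℂ) * ((l ^ p : ℝ) : ℂ) * ω (l * r)
    + (χ l : ℂ) * ((p * l ^ (p - 1) : ℝ) : ℂ) * ω (l * r)
    + (χ l : ℂ) * ((l ^ p : ℝ) : ℂ) * (ω' (l * r) * (r : ℂ)) with hF'
  set E : ℝ → ℂ := fun l => Complex.exp (Complex.I * l * ((t : ℂ) - r)) with hE
  have hEnorm : ∀ l : ℝ, ‖E l‖ = 1 := by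
    intro l
    rw [hE]
    simp only [Complex.norm_exp]
    have : (Complex.I * l * ((t : ℂ) - r)).re = 0 := by simp [Complex.mul_re, Complex.mul_im]
    rw [this, Real.exp_zero]
  have hEc : Continuous E := by
    rw [hE]
    exact Complex.continuous_exp.comp
      (((continuous_const.mul Complex.continuous_ofReal).mul continuous_const))
  -- goal rewrite
  rw [show (∫ l in Set.Ioi (0:ℝ), Complex.exp (Complex.I * l * ((t : ℂ) - r)) * (χ l : ℂ) *
        ((l ^ p : ℝ) : ℂ) * ω (l * r)) = ∫ l in Set.Ioi (0:ℝ), E l * F l from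
    setIntegral_congr_fun measurableSet_Ioi (fun l _ => by rw [hE, hF]; ring)]
  -- the cutoff point
  set m : ℝ := max (1/2) (1/(4*r)) with hmdef
  have hmpos : (0:ℝ) < m := lt_of_lt_of_le (by norm_num) (le_max_left _ _)
  have hmhalf : 1/2 ≤ m := le_max_left _ _
  have hminv : 1/m ≤ 4*r := by
    have h1 : 1/(4*r) ≤ m := le_max_right _ _
    rw [div_le_iff₀ (by positivity)] at h1
    rw [div_le_iff₀ hmpos]
    linarith
  have hF0 : ∀ l : ℝ, l < m → F l = 0 ∧ F' l = 0 := by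
    intro l hl
    rcases lt_max_iff.mp hl with h | h
    · have hc : χ l = 0 := hχ0 l h.le
      have hd : deriv χ l = 0 := hdχ0 l h
      constructor <;> simp [hF, hF', hc, hd]
    · have hz : l * r < 1/4 := by
        rw [lt_div_iff₀ (by positivity : (0:ℝ) < 4*r)] at h
        nlinarith
      have h1 : ω (l*r) = 0 := hsupp _ hz
      have h2 : ω' (l*r) = 0 := hω'0 _ hz
      constructor <;> simp [hF, hF', h1, h2]
  -- derivatives
  have hFd : ∀ l : ℝ, 0 < l → HasDerivAt F (F' l) l := by
    intro l hl
    have h1 : HasDerivAt (fun x : ℝ => ((χ x : ℝ) : ℂ)) ((deriv χ l : ℝ) : ℂ) l :=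
      ((hχ.differentiable (by simp) l).hasDerivAt).ofReal_comp
    have h2 : HasDerivAt (fun x : ℝ => ((x ^ p : ℝ) : ℂ)) ((p * l ^ (p-1) : ℝ) : ℂ) l :=
      (Real.hasDerivAt_rpow_const (Or.inl hl.ne')).ofReal_comp
    have h3 : HasDerivAt (fun x : ℝ => ω (x * r)) (ω' (l * r) * (r:ℂ)) l := by
      have := HasDerivAt.scomp (x := l) (hder (l * r)) (hasDerivAt_mul_const r)
      simpa [Function.comp_def, Complex.real_smul, mul_comm] using this
    have := (h1.mul h2).mul h3
    convert this using 1
    · rfl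
    · rfl
    rw [hF']
    push_cast [Pi.mul_apply]
    ring
  have hEd : ∀ l : ℝ, HasDerivAt E (E l * (Complex.I * ((t:ℂ) - r))) l := by
    intro l
    have h0 : HasDerivAt (fun x : ℝ => ((x : ℝ) : ℂ)) ((1:ℝ) : ℂ) l :=
      (hasDerivAt_id l).ofReal_comp
    have h1 := (h0.const_mul Complex.I).mul_const ((t:ℂ) - r)
    have h2 := h1.cexp
    rw [hE]
    convert h2 using 1
    push_cast
    ring
  -- norm bounds for ω at positive points
  have hωz : ∀ z : ℝ, 0 < z → ‖ω z‖ ≤ z ^ (-(1:ℝ)/2) := fun z hz =>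
    (hωb z hz.le).trans (Real.rpow_le_rpow_of_nonpos hz (by linarith) (by linarith))
  have hω'z : ∀ z : ℝ, 0 < z → ‖ω' z‖ ≤ z ^ (-(3:ℝ)/2) := fun z hz =>
    (hω'b z hz.le).trans (Real.rpow_le_rpow_of_nonpos hz (by linarith) (by linarith))
  -- rpow algebra facts
  have hfact : ∀ l : ℝ, 0 < l → ∀ q : ℝ, l ^ q * (l*r) ^ (-(1:ℝ)/2) = r ^ (-(1:ℝ)/2) * l ^ (q - 1/2) := by
    intro l hl q
    rw [Real.mul_rpow hl.le hr.le, ← mul_assoc, ← Real.rpow_add hl, mul_comm]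
    congr 2
    try ring
  have hfact3 : ∀ l : ℝ, 0 < l → l ^ p * ((l*r) ^ (-(3:ℝ)/2) * r) = r ^ (-(1:ℝ)/2) * l ^ (-(2:ℝ) - ε) := by
    intro l hl
    rw [Real.mul_rpow hl.le hr.le]
    have e1 : r ^ (-(3:ℝ)/2) * r = r ^ (-(1:ℝ)/2) := by
      nth_rewrite 2 [show r = r ^ (1:ℝ) from (Real.rpow_one r).symm]
      rw [← Real.rpow_add hr]; norm_num
    calc l ^ p * (l ^ (-(3:ℝ)/2) * r ^ (-(3:ℝ)/2) * r)
        = (l ^ p * l ^ (-(3:ℝ)/2)) * (r ^ (-(3:ℝ)/2) * r) := by ring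
      _ = l ^ (p + -(3:ℝ)/2) * r ^ (-(1:ℝ)/2) := by rw [← Real.rpow_add hl, e1]
      _ = r ^ (-(1:ℝ)/2) * l ^ (-(2:ℝ) - ε) := by
          rw [mul_comm, hpdef]; congr 2; try ring
  have hD : ∀ l : ℝ, 1/2 ≤ l → l ^ (-(2:ℝ) - ε) ≤ 2^ε * l ^ (-(2:ℝ)) := by
    intro l hl
    have hlpos : (0:ℝ) < l := by linarith
    have h1 : l ^ (-(2:ℝ) - ε) = l ^ (-(2:ℝ)) * l ^ (-ε) := by
      rw [← Real.rpow_add hlpos]; congr 1; try ring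
    have h2 : l ^ (-ε) ≤ (1/2:ℝ) ^ (-ε) :=
      Real.rpow_le_rpow_of_nonpos (by norm_num) hl (by linarith)
    have h3 : ((1:ℝ)/2) ^ (-ε) = 2 ^ ε := by
      rw [one_div, Real.inv_rpow (by norm_num : (0:ℝ) ≤ 2),
        Real.rpow_neg (by norm_num : (0:ℝ) ≤ 2), inv_inv]
    rw [h1, mul_comm]
    exact mul_le_mul_of_nonneg_right (h2.trans_eq h3) (Real.rpow_nonneg hlpos.le _)
  have hC : ∀ l : ℝ, 1/2 ≤ l → l ≤ 1 → l ^ (-(1:ℝ) - ε) ≤ 2^ε * l ^ (-(2:ℝ)) := by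
    intro l hl hl1
    have hlpos : (0:ℝ) < l := by linarith
    have e : l ^ (-(1:ℝ) - ε) = l ^ (-(2:ℝ)) * (l ^ (1:ℝ) * l ^ (-ε)) := by
      rw [← Real.rpow_add hlpos, ← Real.rpow_add hlpos]; congr 1; try ring
    have h2 : l ^ (-ε) ≤ (1/2:ℝ) ^ (-ε) :=
      Real.rpow_le_rpow_of_nonpos (by norm_num) hl (by linarith)
    have h3 : ((1:ℝ)/2) ^ (-ε) = 2 ^ ε := by
      rw [one_div, Real.inv_rpow (by norm_num : (0:ℝ) ≤ 2),
        Real.rpow_neg (by norm_num : (0:ℝ) ≤ 2), inv_inv]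
    have h4 : l ^ (1:ℝ) * l ^ (-ε) ≤ 2 ^ ε := by
      rw [Real.rpow_one]
      calc l * l ^ (-ε) ≤ 1 * (2^ε) := by
            apply mul_le_mul hl1 (h2.trans_eq h3) (Real.rpow_nonneg hlpos.le _) (by norm_num)
        _ = 2^ε := one_mul _
    rw [e, mul_comm]
    exact mul_le_mul_of_nonneg_right h4 (Real.rpow_nonneg hlpos.le _)
  -- pointwise bound on F
  have hFb : ∀ l ∈ Ici m, ‖F l‖ ≤ N * (r ^ (-(1:ℝ)/2) * l ^ (-(1:ℝ) - ε)) := by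
    intro l hl
    have hl2 : 1/2 ≤ l := le_trans hmhalf hl
    have hlpos : (0:ℝ) < l := by linarith
    have hzpos : (0:ℝ) < l * r := by positivity
    have hrp : (0:ℝ) ≤ l ^ p := Real.rpow_nonneg hlpos.le p
    have h1 : ‖F l‖ ≤ N * (l ^ p * (l*r) ^ (-(1:ℝ)/2)) := by
      rw [hF]
      simp only [norm_mul, Complex.norm_real, Real.norm_eq_abs, _root_.abs_of_nonneg hrp]
      calc |χ l| * l ^ p * ‖ω (l*r)‖ ≤ N * l ^ p * ((l*r) ^ (-(1:ℝ)/2)) := by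
            apply mul_le_mul (mul_le_mul_of_nonneg_right (hNb l) hrp) (hωz _ hzpos)
              (norm_nonneg _) (mul_nonneg hN0.le hrp)
        _ = N * (l ^ p * (l*r) ^ (-(1:ℝ)/2)) := by ring
    refine h1.trans ?_
    rw [hfact l hlpos p]
    have : p - 1/2 = -(1:ℝ) - ε := by rw [hpdef]; ring
    rw [this]
  -- pointwise bound on F'
  have hF'b : ∀ l ∈ Ici m, ‖F' l‖ ≤ K * (r ^ (-(1:ℝ)/2) * l ^ (-(2:ℝ))) := by
    intro l hl
    have hl2 : 1/2 ≤ l := le_trans hmhalf hl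
    have hlpos : (0:ℝ) < l := by linarith
    have hzpos : (0:ℝ) < l * r := by positivity
    have hrp : (0:ℝ) ≤ l ^ p := Real.rpow_nonneg hlpos.le p
    have hrp1 : (0:ℝ) ≤ l ^ (p-1) := Real.rpow_nonneg hlpos.le _
    have hbase : (0:ℝ) ≤ r ^ (-(1:ℝ)/2) * l ^ (-(2:ℝ)) :=
      mul_nonneg (Real.rpow_nonneg hr.le _) (Real.rpow_nonneg hlpos.le _)
    have habsp : |p| = 1/2 + ε := by rw [hpdef, abs_of_neg (by linarith : -(1:ℝ)/2 - ε < 0)]; ring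
    -- term 1
    have hT1 : ‖((deriv χ l : ℝ) : ℂ) * ((l ^ p : ℝ) : ℂ) * ω (l * r)‖ ≤
        (2^ε * M) * (r ^ (-(1:ℝ)/2) * l ^ (-(2:ℝ))) := by
      rcases le_or_gt l 1 with hle | hgt
      · simp only [norm_mul, Complex.norm_real, Real.norm_eq_abs, _root_.abs_of_nonneg hrp]
        calc |deriv χ l| * l ^ p * ‖ω (l*r)‖ ≤ M * l ^ p * ((l*r) ^ (-(1:ℝ)/2)) := by
              apply mul_le_mul (mul_le_mul_of_nonneg_right (hM l) hrp) (hωz _ hzpos)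
                (norm_nonneg _) (mul_nonneg hM0 hrp)
          _ = M * (l ^ p * (l*r) ^ (-(1:ℝ)/2)) := by ring
          _ = M * (r ^ (-(1:ℝ)/2) * l ^ (-(1:ℝ) - ε)) := by
              rw [hfact l hlpos p, show p - 1/2 = -(1:ℝ) - ε by rw [hpdef]; ring]
          _ ≤ M * (r ^ (-(1:ℝ)/2) * (2^ε * l ^ (-(2:ℝ)))) := by
              apply mul_le_mul_of_nonneg_left
                (mul_le_mul_of_nonneg_left (hC l hl2 hle) (Real.rpow_nonneg hr.le _)) hM0
          _ = (2^ε * M) * (r ^ (-(1:ℝ)/2) * l ^ (-(2:ℝ))) := by ring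
      · rw [hdχ1 l hgt]
        simp only [Complex.ofReal_zero, zero_mul, norm_zero]
        exact mul_nonneg (mul_nonneg h2ε.le hM0) hbase
    -- term 2
    have hT2 : ‖((χ l : ℝ) : ℂ) * ((p * l ^ (p-1) : ℝ) : ℂ) * ω (l * r)‖ ≤
        (2^ε * (N * (1/2 + ε))) * (r ^ (-(1:ℝ)/2) * l ^ (-(2:ℝ))) := by
      simp only [norm_mul, Complex.norm_real, Real.norm_eq_abs, abs_mul, habsp,
        _root_.abs_of_nonneg hrp1]
      calc |χ l| * ((1/2+ε) * l ^ (p-1)) * ‖ω (l*r)‖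
          ≤ N * ((1/2+ε) * l ^ (p-1)) * ((l*r) ^ (-(1:ℝ)/2)) := by
            apply mul_le_mul (mul_le_mul_of_nonneg_right (hNb l)
              (mul_nonneg (by linarith) hrp1)) (hωz _ hzpos) (norm_nonneg _)
              (mul_nonneg hN0.le (mul_nonneg (by linarith) hrp1))
        _ = (N * (1/2+ε)) * (l ^ (p-1) * (l*r) ^ (-(1:ℝ)/2)) := by ring
        _ = (N * (1/2+ε)) * (r ^ (-(1:ℝ)/2) * l ^ (-(2:ℝ) - ε)) := by
            rw [hfact l hlpos (p-1), show p - 1 - 1/2 = -(2:ℝ) - ε by rw [hpdef]; ring]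
        _ ≤ (N * (1/2+ε)) * (r ^ (-(1:ℝ)/2) * (2^ε * l ^ (-(2:ℝ)))) := by
            apply mul_le_mul_of_nonneg_left
              (mul_le_mul_of_nonneg_left (hD l hl2) (Real.rpow_nonneg hr.le _))
              (mul_nonneg hN0.le (by linarith))
        _ = (2^ε * (N * (1/2+ε))) * (r ^ (-(1:ℝ)/2) * l ^ (-(2:ℝ))) := by ring
    -- term 3
    have hT3 : ‖((χ l : ℝ) : ℂ) * ((l ^ p : ℝ) : ℂ) * (ω' (l * r) * (r : ℂ))‖ ≤
        (2^ε * N) * (r ^ (-(1:ℝ)/2) * l ^ (-(2:ℝ))) := by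
      simp only [norm_mul, Complex.norm_real, Real.norm_eq_abs, _root_.abs_of_nonneg hrp,
        _root_.abs_of_nonneg hr.le]
      calc |χ l| * l ^ p * (‖ω' (l*r)‖ * r)
          ≤ N * l ^ p * ((l*r) ^ (-(3:ℝ)/2) * r) := by
            apply mul_le_mul (mul_le_mul_of_nonneg_right (hNb l) hrp)
              (mul_le_mul_of_nonneg_right (hω'z _ hzpos) hr.le)
              (mul_nonneg (norm_nonneg _) hr.le) (mul_nonneg hN0.le hrp)
        _ = N * (l ^ p * ((l*r) ^ (-(3:ℝ)/2) * r)) := by ring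
        _ = N * (r ^ (-(1:ℝ)/2) * l ^ (-(2:ℝ) - ε)) := by rw [hfact3 l hlpos]
        _ ≤ N * (r ^ (-(1:ℝ)/2) * (2^ε * l ^ (-(2:ℝ)))) := by
            apply mul_le_mul_of_nonneg_left
              (mul_le_mul_of_nonneg_left (hD l hl2) (Real.rpow_nonneg hr.le _)) hN0.le
        _ = (2^ε * N) * (r ^ (-(1:ℝ)/2) * l ^ (-(2:ℝ))) := by ring
    calc ‖F' l‖ ≤ ‖((deriv χ l : ℝ) : ℂ) * ((l ^ p : ℝ) : ℂ) * ω (l * r)‖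
          + ‖((χ l : ℝ) : ℂ) * ((p * l ^ (p-1) : ℝ) : ℂ) * ω (l * r)‖
          + ‖((χ l : ℝ) : ℂ) * ((l ^ p : ℝ) : ℂ) * (ω' (l * r) * (r : ℂ))‖ := by
          rw [hF']; exact norm_add₃_le
      _ ≤ (2^ε * M) * (r ^ (-(1:ℝ)/2) * l ^ (-(2:ℝ)))
          + (2^ε * (N * (1/2 + ε))) * (r ^ (-(1:ℝ)/2) * l ^ (-(2:ℝ)))
          + (2^ε * N) * (r ^ (-(1:ℝ)/2) * l ^ (-(2:ℝ))) := by
          exact add_le_add (add_le_add hT1 hT2) hT3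
      _ = (2^ε * (M + N*(1/2+ε) + N)) * (r ^ (-(1:ℝ)/2) * l ^ (-(2:ℝ))) := by ring
      _ ≤ K * (r ^ (-(1:ℝ)/2) * l ^ (-(2:ℝ))) := by
          apply mul_le_mul_of_nonneg_right _ hbase
          rw [hKdef]; linarith
  -- measurability
  have hω'm : Measurable ω' := by
    have : ω' = deriv ω := funext fun z => ((hder z).deriv).symm
    rw [this]; exact measurable_deriv ω
  have hχcast : Continuous fun l : ℝ => ((χ l : ℝ) : ℂ) := Complex.continuous_ofReal.comp hχc
  have hdχcast : Continuous fun l : ℝ => ((deriv χ l : ℝ) : ℂ) :=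
    Complex.continuous_ofReal.comp hdχc
  have hmulr : Continuous fun l : ℝ => l * r := continuous_id.mul continuous_const
  have hrpC : ContinuousOn (fun l : ℝ => ((l ^ p : ℝ) : ℂ)) (Ioi 0) := fun x hx =>
    (Complex.continuous_ofReal.continuousAt.comp
      (Real.continuousAt_rpow_const x p (Or.inl (ne_of_gt hx)))).continuousWithinAt
  have hrp1C : ContinuousOn (fun l : ℝ => ((p * l ^ (p-1) : ℝ) : ℂ)) (Ioi 0) := fun x hx =>
    (Complex.continuous_ofReal.continuousAt.comp
      ((Real.continuousAt_rpow_const x (p-1) (Or.inl (ne_of_gt hx))).const_mul p)).continuousWithinAt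
  have hFC : ContinuousOn F (Ioi 0) := by
    rw [hF]
    exact (hχcast.continuousOn.mul hrpC).mul ((hωc.comp hmulr).continuousOn)
  have hF'M : AEStronglyMeasurable F' (volume.restrict (Ioi 0)) := by
    rw [hF']
    refine AEStronglyMeasurable.add (AEStronglyMeasurable.add ?_ ?_) ?_
    · exact (((hdχcast.continuousOn.mul hrpC).mul
        ((hωc.comp hmulr).continuousOn)).aestronglyMeasurable measurableSet_Ioi)
    · exact (((hχcast.continuousOn.mul hrp1C).mul
        ((hωc.comp hmulr).continuousOn)).aestronglyMeasurable measurableSet_Ioi)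
    · refine (((hχcast.continuousOn.mul hrpC)).aestronglyMeasurable measurableSet_Ioi).mul ?_
      exact ((hω'm.comp (measurable_id.mul_const r)).mul_const (r:ℂ)).aestronglyMeasurable
  -- integrability
  have hq : -(1:ℝ) - ε < -1 := by linarith
  have hdisj : Disjoint (Ioo (0:ℝ) m) (Ici m) :=
    Set.disjoint_left.mpr fun x hx hx' => absurd hx.2 (not_lt.mpr hx')
  have hunion : Ioo (0:ℝ) m ∪ Ici m = Ioi 0 := Ioo_union_Ici_eq_Ioi hmpos
  have hcnorm : ‖Complex.I * ((t:ℂ) - r)‖ = t - r := by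
    rw [norm_mul, Complex.norm_I, one_mul,
      show ((t:ℂ) - (r:ℂ)) = (((t - r : ℝ)) : ℂ) by push_cast; ring,
      Complex.norm_real, Real.norm_eq_abs, _root_.abs_of_pos hapos]
  have hintF : IntegrableOn (fun l => E l * (Complex.I * ((t:ℂ) - r)) * F l) (Ioi 0) := by
    rw [← hunion]
    apply IntegrableOn.union
    · refine (integrableOn_zero).congr_fun (fun x hx => ?_) measurableSet_Ioo
      simp [(hF0 x hx.2).1]
    · rw [integrableOn_Ici_iff_integrableOn_Ioi]
      have hig : IntegrableOn (fun l : ℝ => ((t-r) * N * r ^ (-(1:ℝ)/2)) * l ^ (-(1:ℝ) - ε))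
          (Ioi m) := (integrableOn_Ioi_rpow_of_lt hq hmpos).const_mul _
      refine Integrable.mono' hig ?_ ?_
      · exact (hEc.aestronglyMeasurable.mul_const _).mul
          ((hFC.aestronglyMeasurable measurableSet_Ioi).mono_measure
            (Measure.restrict_mono (Ioi_subset_Ioi hmpos.le) le_rfl))
      · filter_upwards [ae_restrict_mem measurableSet_Ioi] with x hx
        have hb := hFb x (show m ≤ x from le_of_lt hx)
        calc ‖E x * (Complex.I * ((t:ℂ)-r)) * F x‖
            = ‖E x‖ * ‖Complex.I * ((t:ℂ)-r)‖ * ‖F x‖ := by rw [norm_mul, norm_mul]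
          _ = (t - r) * ‖F x‖ := by rw [hEnorm x, hcnorm, one_mul]
          _ ≤ (t - r) * (N * (r ^ (-(1:ℝ)/2) * x ^ (-(1:ℝ) - ε))) :=
              mul_le_mul_of_nonneg_left hb hapos.le
          _ = ((t-r) * N * r ^ (-(1:ℝ)/2)) * x ^ (-(1:ℝ) - ε) := by ring
  have hintF' : IntegrableOn (fun l => E l * F' l) (Ioi 0) := by
    rw [← hunion]
    apply IntegrableOn.union
    · refine (integrableOn_zero).congr_fun (fun x hx => ?_) measurableSet_Ioo
      simp [(hF0 x hx.2).2]
    · rw [integrableOn_Ici_iff_integrableOn_Ioi]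
      have hig : IntegrableOn (fun l : ℝ => (K * r ^ (-(1:ℝ)/2)) * l ^ (-(2:ℝ))) (Ioi m) :=
        (integrableOn_Ioi_rpow_of_lt (by norm_num) hmpos).const_mul _
      refine Integrable.mono' hig ?_ ?_
      · exact hEc.aestronglyMeasurable.mul
          (hF'M.mono_measure (Measure.restrict_mono (Ioi_subset_Ioi hmpos.le) le_rfl))
      · filter_upwards [ae_restrict_mem measurableSet_Ioi] with x hx
        calc ‖E x * F' x‖ = ‖F' x‖ := by rw [norm_mul, hEnorm, one_mul]
          _ ≤ K * (r ^ (-(1:ℝ)/2) * x ^ (-(2:ℝ))) := hF'b x (show m ≤ x from le_of_lt hx)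
          _ = (K * r ^ (-(1:ℝ)/2)) * x ^ (-(2:ℝ)) := by ring
  -- integration by parts
  have hcont0 : ContinuousWithinAt (fun x => E x * F x) (Ici 0) 0 := by
    have hev : (fun x => E x * F x) =ᶠ[nhds (0:ℝ)] fun _ => 0 := by
      filter_upwards [Iio_mem_nhds (show (0:ℝ) < 1/2 by norm_num)] with y hy
      rw [hF]
      simp [hχ0 y hy.le]
    exact ((continuousAt_congr hev).mpr continuousAt_const).continuousWithinAt
  have htend : Tendsto (fun x => E x * F x) atTop (nhds 0) := by
    apply squeeze_zero_norm' (a := fun x : ℝ => N * x ^ p)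
    · filter_upwards [eventually_gt_atTop (0:ℝ)] with x hx
      have hrp : (0:ℝ) ≤ x ^ p := Real.rpow_nonneg hx.le p
      have hω1 : ‖ω (x*r)‖ ≤ 1 := by
        refine (hωb _ (by positivity)).trans
          (Real.rpow_le_one_of_one_le_of_nonpos ?_ (by norm_num))
        nlinarith
      rw [norm_mul, hEnorm x, one_mul, hF]
      simp only [norm_mul, Complex.norm_real, Real.norm_eq_abs, _root_.abs_of_nonneg hrp]
      calc |χ x| * x ^ p * ‖ω (x*r)‖ ≤ N * x ^ p * 1 :=
            mul_le_mul (mul_le_mul_of_nonneg_right (hNb x) hrp) hω1 (norm_nonneg _)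
              (mul_nonneg hN0.le hrp)
        _ = N * x ^ p := mul_one _
    · have h1 : Tendsto (fun x : ℝ => x ^ p) atTop (nhds 0) := by
        have := tendsto_rpow_neg_atTop (show (0:ℝ) < -p by linarith)
        simpa [neg_neg] using this
      simpa using h1.const_mul N
  have hibp : ∫ l in Ioi (0:ℝ), (E l * (Complex.I * ((t:ℂ) - r)) * F l + E l * F' l)
      = 0 - (E 0 * F 0) := by
    refine integral_Ioi_of_hasDerivAt_of_tendsto hcont0 (fun x hx => ?_)
      (hintF.add hintF') htend
    exact (hEd x).mul (hFd x hx)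
  have hEF0 : E 0 * F 0 = 0 := by rw [hF]; simp [hχ0 0 (by norm_num)]
  rw [hEF0, sub_zero, integral_add hintF hintF'] at hibp
  have hpull : ∫ l in Ioi (0:ℝ), E l * (Complex.I * ((t:ℂ) - r)) * F l
      = (Complex.I * ((t:ℂ) - r)) * ∫ l in Ioi (0:ℝ), E l * F l := by
    rw [← integral_const_mul]
    exact setIntegral_congr_fun measurableSet_Ioi fun l _ => by ring
  rw [hpull] at hibp
  have hkey : (Complex.I * ((t:ℂ) - r)) * (∫ l in Ioi (0:ℝ), E l * F l)
      = - ∫ l in Ioi (0:ℝ), E l * F' l := eq_neg_of_add_eq_zero_left hibp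
  -- bound the derivative integral
  have hBnorm : ‖∫ l in Ioi (0:ℝ), E l * F' l‖ ≤ (K * r ^ (-(1:ℝ)/2)) * (1/m) := by
    have hsplit2 : ∫ l in Ioi (0:ℝ), E l * F' l = ∫ l in Ici m, E l * F' l := by
      rw [← hunion, setIntegral_union hdisj measurableSet_Ici
        (hintF'.mono_set (by rw [← hunion]; exact subset_union_left))
        (hintF'.mono_set (by rw [← hunion]; exact subset_union_right)),
        setIntegral_congr_fun measurableSet_Ioo
          (fun x hx => by simp [(hF0 x hx.2).2] : EqOn _ (fun _ => (0:ℂ)) _),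
        integral_zero, zero_add]
    rw [hsplit2]
    have hgi : Integrable (fun l : ℝ => (K * r ^ (-(1:ℝ)/2)) * l ^ (-(2:ℝ)))
        (volume.restrict (Ici m)) :=
      (integrableOn_Ici_iff_integrableOn_Ioi).mpr
        ((integrableOn_Ioi_rpow_of_lt (by norm_num) hmpos).const_mul _)
    refine (norm_integral_le_of_norm_le hgi ?_).trans_eq ?_
    · filter_upwards [ae_restrict_mem measurableSet_Ici] with x hx
      calc ‖E x * F' x‖ = ‖F' x‖ := by rw [norm_mul, hEnorm, one_mul]
        _ ≤ K * (r ^ (-(1:ℝ)/2) * x ^ (-(2:ℝ))) := hF'b x hx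
        _ = (K * r ^ (-(1:ℝ)/2)) * x ^ (-(2:ℝ)) := by ring
    · rw [integral_const_mul, integral_Ici_eq_integral_Ioi,
        integral_Ioi_rpow_of_lt (by norm_num) hmpos]
      norm_num
      rw [Real.rpow_neg_one]
      rw [one_div]
      try exact Or.inl rfl
  -- final assembly
  have hJ : (t - r) * ‖∫ l in Ioi (0:ℝ), E l * F l‖ = ‖∫ l in Ioi (0:ℝ), E l * F' l‖ := by
    rw [← hcnorm, ← norm_mul, hkey, norm_neg]
  have hnn : 0 ≤ ‖∫ l in Ioi (0:ℝ), E l * F l‖ := norm_nonneg _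
  have hstep1 : (t - r) * ‖∫ l in Ioi (0:ℝ), E l * F l‖ ≤ (K * r ^ (-(1:ℝ)/2)) * (4*r) := by
    rw [hJ]
    refine hBnorm.trans ?_
    exact mul_le_mul_of_nonneg_left hminv (mul_nonneg hK0.le (Real.rpow_nonneg hr.le _))
  have hr12 : r ^ (-(1:ℝ)/2) * (4*r) = 4 * r ^ ((1:ℝ)/2) := by
    rw [show r ^ (-(1:ℝ)/2) * (4*r) = 4 * (r ^ (-(1:ℝ)/2) * r ^ (1:ℝ)) by
      rw [Real.rpow_one]; ring, ← Real.rpow_add hr]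
    norm_num
  have hstep2 : (t - r) * ‖∫ l in Ioi (0:ℝ), E l * F l‖ ≤ 4 * K * t ^ ((1:ℝ)/2) := by
    refine hstep1.trans ?_
    rw [mul_assoc, hr12]
    have : r ^ ((1:ℝ)/2) ≤ t ^ ((1:ℝ)/2) := Real.rpow_le_rpow hr.le hrt (by norm_num)
    calc K * (4 * r ^ ((1:ℝ)/2)) = 4 * K * r ^ ((1:ℝ)/2) := by ring
      _ ≤ 4 * K * t ^ ((1:ℝ)/2) := by
          exact mul_le_mul_of_nonneg_left this (by positivity)
  have hhalf : (0:ℝ) < t/2 := by linarith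
  have hfinal : ‖∫ l in Ioi (0:ℝ), E l * F l‖ ≤ (4 * K * t ^ ((1:ℝ)/2)) / (t/2) := by
    rw [le_div_iff₀ hhalf]
    calc ‖∫ l in Ioi (0:ℝ), E l * F l‖ * (t/2)
        ≤ ‖∫ l in Ioi (0:ℝ), E l * F l‖ * (t - r) := mul_le_mul_of_nonneg_left htr hnn
      _ = (t - r) * ‖∫ l in Ioi (0:ℝ), E l * F l‖ := mul_comm _ _
      _ ≤ 4 * K * t ^ ((1:ℝ)/2) := hstep2
  refine hfinal.trans (le_of_eq ?_)
  have ht12 : t ^ ((1:ℝ)/2) = t ^ (-(1:ℝ)/2) * t := by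
    rw [show t ^ (-(1:ℝ)/2) * t = t ^ (-(1:ℝ)/2) * t ^ (1:ℝ) by rw [Real.rpow_one],
      ← Real.rpow_add ht]
    norm_num
  rw [ht12]
  field_simp
  ring




/-- Stationary-phase-free bound: for ω supported in [1/4,∞) with |ω(z)| ≤ (1+z)^{-1/2},
|ω'(z)| ≤ (1+z)^{-3/2}, a smooth cutoff χ̃ vanishing on [0,1/2] and ≡ 1 on [1,∞),
and t > 0, r > 0 with t − r ≥ t/2:
|∫₀^∞ e^{iλ(t−r)} χ̃(λ) λ^{-1/2-ε} ω(λr) dλ| ≤ C t^{-1/2}. -/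
theorem stmt19 (ε : ℝ) (hε : 0 < ε) (χ : ℝ → ℝ)
    (hχ : ContDiff ℝ (⊤ : ℕ∞) χ) (hχ0 : ∀ x : ℝ, x ≤ 1/2 → χ x = 0)
    (hχ1 : ∀ x : ℝ, 1 ≤ x → χ x = 1) :
    ∃ C > (0:ℝ), ∀ (ω ω' : ℝ → ℂ) (t r : ℝ), 0 < t → 0 < r → t/2 ≤ t - r →
      (∀ z : ℝ, z < 1/4 → ω z = 0) →
      (∀ z : ℝ, 0 ≤ z → ‖ω z‖ ≤ (1 + z) ^ (-(1:ℝ)/2)) →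
      (∀ z : ℝ, HasDerivAt ω (ω' z) z) →
      (∀ z : ℝ, 0 ≤ z → ‖ω' z‖ ≤ (1 + z) ^ (-(3:ℝ)/2)) →
      ‖∫ l in Set.Ioi (0:ℝ), Complex.exp (Complex.I * l * ((t : ℂ) - r)) * (χ l : ℂ) *
          ((l ^ (-(1:ℝ)/2 - ε) : ℝ) : ℂ) * ω (l * r)‖ ≤ C * t ^ (-(1:ℝ)/2) := by
  have hχc : Continuous χ := hχ.continuous
  have hdχc : Continuous (deriv χ) := hχ.continuous_deriv (by simp)
  obtain ⟨N0, hN0⟩ :=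
    (isCompact_Icc (a := (0:ℝ)) (b := 1)).exists_bound_of_continuousOn hχc.continuousOn
  obtain ⟨M0, hM0⟩ :=
    (isCompact_Icc (a := (0:ℝ)) (b := 1)).exists_bound_of_continuousOn hdχc.continuousOn
  set N : ℝ := max N0 1 with hNdef
  set M : ℝ := max M0 0 with hMdef
  have hN1 : 1 ≤ N := le_max_right _ _
  have hNb : ∀ x : ℝ, |χ x| ≤ N := by
    intro x
    rcases lt_or_ge x 0 with h | h
    · rw [hχ0 x (by linarith)]
      simpa using le_trans zero_le_one hN1
    · rcases le_or_gt x 1 with h1 | h1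
      · exact le_trans (by simpa [Real.norm_eq_abs] using hN0 x ⟨h, h1⟩) (le_max_left _ _)
      · rw [hχ1 x h1.le]
        simpa using hN1
  have hdχ0 : ∀ x : ℝ, x < 1/2 → deriv χ x = 0 := by
    intro x hx
    have h1 : χ =ᶠ[nhds x] fun _ => 0 := by
      filter_upwards [Iio_mem_nhds hx] with y hy using hχ0 y hy.le
    rw [h1.deriv_eq]; exact deriv_const x 0
  have hdχ1 : ∀ x : ℝ, 1 < x → deriv χ x = 0 := by
    intro x hx
    have h1 : χ =ᶠ[nhds x] fun _ => 1 := by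
      filter_upwards [Ioi_mem_nhds hx] with y hy using hχ1 y hy.le
    rw [h1.deriv_eq]; exact deriv_const x 1
  have hMb : ∀ x : ℝ, |deriv χ x| ≤ M := by
    intro x
    rcases lt_or_ge x 0 with h | h
    · rw [hdχ0 x (by linarith)]
      simp only [abs_zero]
      exact le_max_right M0 0
    · rcases le_or_gt x 1 with h1 | h1
      · exact le_trans (by simpa [Real.norm_eq_abs] using hM0 x ⟨h, h1⟩) (le_max_left _ _)
      · rw [hdχ1 x h1]
        simp only [abs_zero]
        exact le_max_right M0 0
  have hM0' : (0:ℝ) ≤ M := le_max_right _ _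
  have h2ε : (0:ℝ) < 2^ε := Real.rpow_pos_of_pos two_pos ε
  refine ⟨8 * ((2:ℝ)^ε * (M + N*(1/2+ε) + N) + 1), ?_, ?_⟩
  · have h0 : (0:ℝ) ≤ M + N*(1/2+ε) + N := by nlinarith
    nlinarith [mul_nonneg h2ε.le h0]
  · intro ω ω' t r ht hr htr hsupp hωb hder hω'b
    exact aux19 ε M N hε hN1 χ hχ hχ0 hχ1 hMb hNb ω ω' t r ht hr htr hsupp hωb hder hω'b
end
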